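/- If the forward shift S is an isometry on H^p(T), then there exists a sequence (s_n) of natural numbers such that every vertex w has exactly s_{|w|+1} children; explicitly, γ(1,w) = γ(|w|+1)/γ(|w|) for every vertex w. -/

import Mathlib

open scoped BigOperators
open Classical

/-- An infinite, locally finite rooted tree, presented combinatorially via a
parent function and a level (distance-to-root) function.  Every level is a
finite nonempty set of vertices. -/
structure HTree where
  V : Type
  root : V
  parent : V → V
  level : V → ℕ
  level_root : level root = 0
  root_of_level_zero : ∀ v, level v = 0 → v = root
  level_parent : ∀ v, v ≠ root → level (parent v) + 1 = level v
  finite_level : ∀ n : ℕ, {v : V | level v = n}.Finite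
  nonempty_level : ∀ n : ℕ, {v : V | level v = n}.Nonempty

namespace HTree

variable (T : HTree)

/-- The finite set of vertices at level `n`. -/
noncomputable def levelFinset (n : ℕ) : Finset T.V := (T.finite_level n).toFinset

/-- `γ(n)`, the number of vertices at level `n`. -/
noncomputable def gamma (n : ℕ) : ℕ := (T.levelFinset n).card

/-- The set of `m`-children of a vertex `v`. -/
noncomputable def nChildrenFinset (m : ℕ) (v : T.V) : Finset T.V :=
  (T.levelFinset (T.level v + m)).filter (fun w => T.parent^[m] w = v)

/-- `γ(m,v)`, the number of `m`-children of `v`. -/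
noncomputable def numNChildren (m : ℕ) (v : T.V) : ℕ := (T.nChildrenFinset m v).card

/-- The set of children of a vertex. -/
noncomputable def childrenFinset (v : T.V) : Finset T.V := T.nChildrenFinset 1 v

/-- `γ(1,v)`, the number of children of `v`. -/
noncomputable def numChildren (v : T.V) : ℕ := T.numNChildren 1 v

/-- `K(m,r)`, the maximal number of `m`-children among vertices at level `r`. -/
noncomputable def K (m r : ℕ) : ℕ := (T.levelFinset r).sup (fun v => T.numNChildren m v)

/-- `M_p^p(n,f)`, the `p`-th power of the `p`-th mean of `|f|` over level `n`. -/
noncomputable def Mpp (p : ℝ) (f : T.V → ℂ) (n : ℕ) : ℝ :=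
  (1 / (T.gamma n : ℝ)) * ∑ v ∈ T.levelFinset n, ‖f v‖ ^ p

/-- `M_p(n,f)`, the `p`-th mean of `|f|` over level `n`. -/
noncomputable def Mp (p : ℝ) (f : T.V → ℂ) (n : ℕ) : ℝ := (T.Mpp p f n) ^ (1 / p)

/-- Membership in the Hardy space `H^p(T)`. -/
def MemHp (p : ℝ) (f : T.V → ℂ) : Prop := ∃ C : ℝ, ∀ n : ℕ, T.Mp p f n ≤ C

/-- Membership in the little Hardy space `H^p_0(T)`. -/
def MemHp0 (p : ℝ) (f : T.V → ℂ) : Prop :=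
  Filter.Tendsto (T.Mp p f) Filter.atTop (nhds 0)

/-- The `H^p` norm, `sup_n M_p(n,f)`. -/
noncomputable def Hnorm (p : ℝ) (f : T.V → ℂ) : ℝ := ⨆ n : ℕ, T.Mp p f n

/-- The forward shift `(Sf)(v) = f(parent v)`, `(Sf)(root) = 0`. -/
noncomputable def S (f : T.V → ℂ) : T.V → ℂ := fun v => if v = T.root then 0 else f (T.parent v)

/-- The backward shift `(Bf)(v) = Σ_{w child of v} f(w)`. -/
noncomputable def B (f : T.V → ℂ) : T.V → ℂ := fun v => ∑ w ∈ T.childrenFinset v, f w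

/-- An operator `A` is bounded on the subspace described by `Mem`, with the
`H^p` norm. -/
def BoundedOn (A : (T.V → ℂ) → (T.V → ℂ)) (Mem : (T.V → ℂ) → Prop) (p : ℝ) : Prop :=
  ∃ C : ℝ, 0 ≤ C ∧ ∀ f, Mem f → Mem (A f) ∧ T.Hnorm p (A f) ≤ C * T.Hnorm p f

/-- The operator norm of `A` on the subspace described by `Mem`. -/
noncomputable def opNorm (A : (T.V → ℂ) → (T.V → ℂ)) (Mem : (T.V → ℂ) → Prop) (p : ℝ) : ℝ :=
  sInf {C : ℝ | 0 ≤ C ∧ ∀ f, Mem f → Mem (A f) ∧ T.Hnorm p (A f) ≤ C * T.Hnorm p f}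

/-- Hypercyclicity of an operator `A` on the subspace described by `Mem`. -/
def Hypercyclic (A : (T.V → ℂ) → (T.V → ℂ)) (Mem : (T.V → ℂ) → Prop) (p : ℝ) : Prop :=
  ∃ f, Mem f ∧ ∀ g, Mem g → ∀ ε : ℝ, 0 < ε →
    ∃ N : ℕ, T.Hnorm p (fun v => A^[N] f v - g v) < ε

end HTree


/-! Test the isometry on the indicator `δ_w` of a single vertex `w`. It is supported on level
`|w|`, and `S δ_w` is the indicator of the children of `w`, supported on level `|w| + 1`. For a
function supported on one level the `H^p` norm is the mean over that level, so
`‖δ_w‖^p = 1 / γ(|w|)` and `‖S δ_w‖^p = γ(1,w) / γ(|w|+1)`; equating them gives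
`γ(1,w) γ(|w|) = γ(|w|+1)`. -/

namespace HTree

variable (T : HTree)

theorem mem_levelFinset {n : ℕ} {v : T.V} : v ∈ T.levelFinset n ↔ T.level v = n :=
  Set.Finite.mem_toFinset _

theorem gamma_pos (n : ℕ) : 0 < T.gamma n := by
  obtain ⟨v, hv⟩ := T.nonempty_level n
  exact Finset.card_pos.mpr ⟨v, T.mem_levelFinset.mpr hv⟩

theorem Mpp_nonneg (p : ℝ) (f : T.V → ℂ) (n : ℕ) : 0 ≤ T.Mpp p f n := by
  unfold Mpp
  have := fun v => Real.rpow_nonneg (norm_nonneg (f v)) p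
  positivity

theorem Mp_nonneg (p : ℝ) (f : T.V → ℂ) (n : ℕ) : 0 ≤ T.Mp p f n :=
  Real.rpow_nonneg (T.Mpp_nonneg p f n) _

theorem Mpp_eq_of_Mp_eq {p : ℝ} (hp : p ≠ 0) {f g : T.V → ℂ} {m n : ℕ}
    (h : T.Mp p f m = T.Mp p g n) : T.Mpp p f m = T.Mpp p g n :=
  Real.rpow_left_injOn (one_div_ne_zero hp) (T.Mpp_nonneg p f m) (T.Mpp_nonneg p g n) h

section SupportedOnLevel

variable {T} {p : ℝ} {f : T.V → ℂ} {r : ℕ}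

theorem Mp_eq_zero_of_supported_on_level (hp : p ≠ 0) (hf : ∀ v, T.level v ≠ r → f v = 0)
    {n : ℕ} (hn : n ≠ r) : T.Mp p f n = 0 := by
  have hsum : ∑ v ∈ T.levelFinset n, ‖f v‖ ^ p = 0 :=
    Finset.sum_eq_zero fun v hv => by
      rw [hf v (T.mem_levelFinset.mp hv ▸ hn), norm_zero, Real.zero_rpow hp]
  rw [Mp, Mpp, hsum, mul_zero, Real.zero_rpow (one_div_ne_zero hp)]

theorem Mp_le_Mp_of_supported_on_level (hp : p ≠ 0) (hf : ∀ v, T.level v ≠ r → f v = 0)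
    (n : ℕ) : T.Mp p f n ≤ T.Mp p f r := by
  rcases eq_or_ne n r with rfl | hn
  · exact le_rfl
  · exact (Mp_eq_zero_of_supported_on_level hp hf hn).trans_le (T.Mp_nonneg p f r)

theorem memHp_of_supported_on_level (hp : p ≠ 0) (hf : ∀ v, T.level v ≠ r → f v = 0) :
    T.MemHp p f :=
  ⟨_, Mp_le_Mp_of_supported_on_level hp hf⟩

theorem Hnorm_eq_Mp_of_supported_on_level (hp : p ≠ 0) (hf : ∀ v, T.level v ≠ r → f v = 0) :
    T.Hnorm p f = T.Mp p f r :=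
  le_antisymm (ciSup_le (Mp_le_Mp_of_supported_on_level hp hf))
    (le_ciSup ⟨_, Set.forall_mem_range.mpr (Mp_le_Mp_of_supported_on_level hp hf)⟩ r)

theorem S_supported_on_level_succ (hf : ∀ v, T.level v ≠ r → f v = 0) :
    ∀ v, T.level v ≠ r + 1 → T.S f v = 0 := by
  intro v hv
  by_cases hroot : v = T.root
  · simp only [S, if_pos hroot]
  · rw [S, if_neg hroot]
    exact hf _ fun h => hv (h ▸ (T.level_parent v hroot).symm)

end SupportedOnLevel

theorem single_supported_on_level (w : T.V) :
    ∀ v, T.level v ≠ T.level w → (Pi.single w 1 : T.V → ℂ) v = 0 :=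
  fun _ hv => Pi.single_eq_of_ne (fun h => hv (congrArg T.level h)) _

theorem norm_rpow_ite_one_zero {p : ℝ} (hp : p ≠ 0) (P : Prop) [Decidable P] :
    ‖(if P then 1 else 0 : ℂ)‖ ^ p = if P then 1 else 0 := by
  split_ifs
  · simp
  · simp [Real.zero_rpow hp]

theorem Mpp_single {p : ℝ} (hp : p ≠ 0) (w : T.V) :
    T.Mpp p (Pi.single w 1) (T.level w) = 1 / T.gamma (T.level w) := by
  simp only [Mpp, Pi.single_apply, norm_rpow_ite_one_zero hp, Finset.sum_ite_eq',
    if_pos (T.mem_levelFinset.mpr rfl), mul_one]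

theorem Mpp_S_single {p : ℝ} (hp : p ≠ 0) (w : T.V) :
    T.Mpp p (T.S (Pi.single w 1)) (T.level w + 1) =
      T.numChildren w / T.gamma (T.level w + 1) := by
  have hS : ∀ v ∈ T.levelFinset (T.level w + 1),
      ‖T.S (Pi.single w 1) v‖ ^ p = if T.parent v = w then 1 else 0 := by
    intro v hv
    have hroot : v ≠ T.root := fun h => by
      simp [h, T.level_root, T.mem_levelFinset] at hv
    rw [S, if_neg hroot, Pi.single_apply, norm_rpow_ite_one_zero hp]
  rw [Mpp, Finset.sum_congr rfl hS, Finset.sum_boole, one_div_mul_eq_div]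
  rfl

theorem numChildren_mul_gamma_of_S_isometry {p : ℝ} (hp : p ≠ 0)
    (hiso : ∀ f : T.V → ℂ, T.MemHp p f → T.Hnorm p (T.S f) = T.Hnorm p f) (w : T.V) :
    T.numChildren w * T.gamma (T.level w) = T.gamma (T.level w + 1) := by
  have hδ := T.single_supported_on_level w
  have hnorm := hiso _ (memHp_of_supported_on_level hp hδ)
  rw [Hnorm_eq_Mp_of_supported_on_level hp hδ,
    Hnorm_eq_Mp_of_supported_on_level hp (S_supported_on_level_succ hδ)] at hnorm
  have hmean := T.Mpp_eq_of_Mp_eq hp hnorm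
  have hγ (n : ℕ) : (T.gamma n : ℝ) ≠ 0 := by exact_mod_cast (T.gamma_pos n).ne'
  rw [Mpp_S_single T hp, Mpp_single T hp, div_eq_div_iff (hγ _) (hγ _), one_mul] at hmean
  exact_mod_cast hmean

end HTree

/-- if the forward shift is an isometry on `H^p(T)`, then the number of
children only depends on the level; explicitly `γ(1,w)·γ(|w|) = γ(|w|+1)`. -/
theorem level_regular_of_forward_shift_isometry (T : HTree) (p : ℝ) (hp : 1 ≤ p)
    (hiso : ∀ f : T.V → ℂ, T.MemHp p f →
      T.MemHp p (T.S f) ∧ T.Hnorm p (T.S f) = T.Hnorm p f) :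
    ∃ s : ℕ → ℕ, ∀ w : T.V,
      T.numChildren w = s (T.level w + 1) ∧
      T.numChildren w * T.gamma (T.level w) = T.gamma (T.level w + 1) := by
  have hregular :=
    T.numChildren_mul_gamma_of_S_isometry (by positivity) fun f hf => (hiso f hf).2
  refine ⟨fun n => T.gamma n / T.gamma (n - 1), fun w => ⟨?_, hregular w⟩⟩
  exact Nat.eq_div_of_mul_eq_left (T.gamma_pos _).ne' (hregular w)
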